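/- (Global asymptotic stability of the extinction equilibrium.) Suppose R_0 < 1. Then the extinction equilibrium E_0 = (0, Q̂, P_h) of the spatially homogeneous system is globally asymptotically stable on the region {(B,Q,P) : B ≥ 0, Q_m ≤ Q ≤ Q_M, P ≥ 0}: E_0 is Lyapunov stable, and every differentiable solution (B, Q, P) : [0, ∞) → ℝ³ of B′(t) = U(B(t),Q(t),P(t)), Q′(t) = V(B(t),Q(t),P(t)), P′(t) = W(B(t),Q(t),P(t)) with B(t) ≥ 0, Q_m ≤ Q(t) ≤ Q_M and P(t) ≥ 0 for all t ≥ 0 converges to E_0 as t → ∞. -/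

import Mathlib

set_option linter.unusedVariables false

/-- Light intensity at depth `s` with biomass `B`:  `I(s,B) = I_in · exp(−(K_bg + k·B)·s)`. -/
noncomputable def lightI (I_in K_bg k : ℝ) (s B : ℝ) : ℝ :=
  I_in * Real.exp (-((K_bg + k * B) * s))

/-- Light-limited growth factor
`h(B) = ln((H + I_in)/(H + I(z_m,B)))/(z_m·(k·B + K_bg))`. -/
noncomputable def hfun (z_m k K_bg H I_in : ℝ) (B : ℝ) : ℝ :=
  Real.log ((H + I_in) / (H + lightI I_in K_bg k z_m B)) / (z_m * (k * B + K_bg))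

/-- Quota uptake function `ρ(Q,P) = ρ_m·((Q_M − Q)/(Q_M − Q_m))·(P/(P + M))`. -/
noncomputable def rhofun (ρ_m Q_m Q_M M : ℝ) (Q P : ℝ) : ℝ :=
  ρ_m * ((Q_M - Q) / (Q_M - Q_m)) * (P / (P + M))

/-- Right-hand side of the `B`-equation of the spatially homogeneous system:
`U(B,Q,P) = r·B·(1 − Q_m/Q)·h(B) − l·B − (D/z_m)·B`. -/
noncomputable def Ufun (r Q_m Q_M z_m k K_bg H I_in l D ρ_m M : ℝ)
    (B Q P : ℝ) : ℝ :=
  r * B * (1 - Q_m / Q) * hfun z_m k K_bg H I_in B - l * B - (D / z_m) * B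

/-- Right-hand side of the `Q`-equation of the spatially homogeneous system:
`V(B,Q,P) = ρ(Q,P) − r·Q·(1 − Q_m/Q)·h(B)`. -/
noncomputable def Vfun (r Q_m Q_M z_m k K_bg H I_in l D ρ_m M : ℝ)
    (B Q P : ℝ) : ℝ :=
  rhofun ρ_m Q_m Q_M M Q P - r * Q * (1 - Q_m / Q) * hfun z_m k K_bg H I_in B

/-- Right-hand side of the `P`-equation of the spatially homogeneous system:
`W(B,Q,P) = (D/z_m)·(P_h − P) − ρ(Q,P)·B + l·B·Q`. -/
noncomputable def Wfun (r Q_m Q_M z_m k K_bg H I_in l D ρ_m M P_h : ℝ)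
    (B Q P : ℝ) : ℝ :=
  (D / z_m) * (P_h - P) - rhofun ρ_m Q_m Q_M M Q P * B + l * B * Q

/-- `ρ̃ = (ρ_m/(Q_M − Q_m))·(P_h/(P_h + M))`. -/
noncomputable def rhoTilde (ρ_m Q_m Q_M M P_h : ℝ) : ℝ :=
  (ρ_m / (Q_M - Q_m)) * (P_h / (P_h + M))

/-- The extinction-state cell quota
`Q̂ = (ρ̃·Q_M + r·h(0)·Q_m)/(ρ̃ + r·h(0))`. -/
noncomputable def Qhat (r Q_m Q_M z_m k K_bg H I_in ρ_m M P_h : ℝ) : ℝ :=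
  (rhoTilde ρ_m Q_m Q_M M P_h * Q_M + r * hfun z_m k K_bg H I_in 0 * Q_m) /
    (rhoTilde ρ_m Q_m Q_M M P_h + r * hfun z_m k K_bg H I_in 0)

/-- The basic ecological reproductive index
`R_0 = r·h(0)·(1 − Q_m/Q̂)/(l + D/z_m)`. -/
noncomputable def R0 (r Q_m Q_M z_m k K_bg H I_in l D ρ_m M P_h : ℝ) : ℝ :=
  r * hfun z_m k K_bg H I_in 0 *
    (1 - Q_m / Qhat r Q_m Q_M z_m k K_bg H I_in ρ_m M P_h) / (l + D / z_m)



section helpers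
open Filter Set
set_option linter.unusedSectionVars false

private lemma antitone_from_deriv {y : ℝ → ℝ} {t0 : ℝ}
    (h : ∀ t ≥ t0, ∃ v, HasDerivAt y v t ∧ v ≤ 0) :
    ∀ t ≥ t0, y t ≤ y t0 := by
  have hcont : ContinuousOn y (Ici t0) := fun t ht =>
    ((h t ht).choose_spec.1.continuousAt).continuousWithinAt
  have hdiff : DifferentiableOn ℝ y (interior (Ici t0)) := by
    rw [interior_Ici]
    exact fun t ht => ((h t (le_of_lt ht)).choose_spec.1.differentiableAt).differentiableWithinAt
  have hA : AntitoneOn y (Ici t0) := by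
    refine antitoneOn_of_deriv_nonpos (convex_Ici t0) hcont hdiff ?_
    rw [interior_Ici]
    intro t ht
    obtain ⟨v, hv, hv0⟩ := h t (le_of_lt ht)
    rw [hv.deriv]; exact hv0
  exact fun t ht => hA (le_refl t0 : t0 ∈ Ici t0) ht ht

private lemma monotone_from_deriv {y : ℝ → ℝ} {t0 : ℝ}
    (h : ∀ t ≥ t0, ∃ v, HasDerivAt y v t ∧ 0 ≤ v) :
    ∀ t ≥ t0, y t0 ≤ y t := by
  have := antitone_from_deriv (y := fun t => -(y t)) (t0 := t0) ?_
  · intro t ht; have := this t ht; linarith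
  · intro t ht; obtain ⟨v, hv, hv0⟩ := h t ht
    exact ⟨-v, hv.neg, by linarith⟩

/-- linear comparison: x' ≤ a - b x on [t0,∞) gives explicit exponential bound. -/
private lemma lin_comp {x : ℝ → ℝ} {a b t0 : ℝ} (hb : 0 < b)
    (hx : ∀ t ≥ t0, ∃ v, HasDerivAt x v t ∧ v ≤ a - b * x t) :
    ∀ t ≥ t0, x t ≤ a / b + (x t0 - a / b) * Real.exp (-(b * (t - t0))) := by
  set y : ℝ → ℝ := fun t => (x t - a / b) * Real.exp (b * (t - t0)) with hy
  have hyd : ∀ t ≥ t0, ∃ v, HasDerivAt y v t ∧ v ≤ 0 := by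
    intro t ht
    obtain ⟨v, hv, hvle⟩ := hx t ht
    have he : HasDerivAt (fun t => Real.exp (b * (t - t0))) (b * Real.exp (b * (t - t0))) t := by
      have h1 : HasDerivAt (fun t : ℝ => b * (t - t0)) b t := by
        simpa using ((hasDerivAt_id t).sub_const t0).const_mul b
      simpa [mul_comm] using h1.exp
    have : HasDerivAt y (v * Real.exp (b * (t - t0)) + (x t - a / b) * (b * Real.exp (b * (t - t0)))) t :=
      (hv.sub_const (a / b)).mul he
    refine ⟨_, this, ?_⟩
    have hexp : (0:ℝ) < Real.exp (b * (t - t0)) := Real.exp_pos _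
    have : v * Real.exp (b * (t - t0)) + (x t - a / b) * (b * Real.exp (b * (t - t0)))
        = (v + b * x t - a) * Real.exp (b * (t - t0)) := by
      field_simp; ring
    rw [this]
    have : v + b * x t - a ≤ 0 := by linarith
    exact mul_nonpos_of_nonpos_of_nonneg this hexp.le
  intro t ht
  have hyle := antitone_from_deriv hyd t ht
  have hy0 : y t0 = x t0 - a / b := by simp [hy]
  have hexp : (0:ℝ) < Real.exp (-(b * (t - t0))) := Real.exp_pos _
  have h2 : y t * Real.exp (-(b * (t - t0))) ≤ (x t0 - a / b) * Real.exp (-(b * (t - t0))) := by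
    rw [← hy0]; exact mul_le_mul_of_nonneg_right hyle hexp.le
  have h3 : y t * Real.exp (-(b * (t - t0))) = x t - a / b := by
    rw [hy]; simp only []
    rw [mul_assoc, ← Real.exp_add]
    simp
  linarith [h2, h3.symm.le, h3.le]

private lemma exp_decay_ev (C d ε : ℝ) (hd : 0 < d) (hε : 0 < ε) :
    ∀ᶠ t in atTop, C * Real.exp (-(d * t)) ≤ ε := by
  have h1 : Tendsto (fun t : ℝ => d * t) atTop atTop :=
    Tendsto.const_mul_atTop hd tendsto_id
  have h2 : Tendsto (fun t : ℝ => -(d * t)) atTop atBot := tendsto_neg_atBot_iff.2 h1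
  have h3 : Tendsto (fun t : ℝ => C * Real.exp (-(d * t))) atTop (nhds 0) := by
    simpa using (Real.tendsto_exp_atBot.comp h2).const_mul C
  exact (h3.eventually_lt_const hε).mono fun t ht => ht.le

private lemma lin_comp_ev {x : ℝ → ℝ} {a b : ℝ} (hb : 0 < b)
    (hx : ∀ᶠ t in atTop, ∃ v, HasDerivAt x v t ∧ v ≤ a - b * x t) :
    ∀ ε > (0:ℝ), ∀ᶠ t in atTop, x t ≤ a / b + ε := by
  intro ε hε
  obtain ⟨T, hT⟩ := eventually_atTop.1 hx
  have hmain := lin_comp hb hT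
  have hdecay := exp_decay_ev ((x T - a / b) * Real.exp (b * T)) b ε hb hε
  filter_upwards [hdecay, eventually_ge_atTop T] with t h1 h2
  have := hmain t h2
  have hre : (x T - a / b) * Real.exp (-(b * (t - T)))
      = (x T - a / b) * Real.exp (b * T) * Real.exp (-(b * t)) := by
    rw [mul_assoc, ← Real.exp_add]; ring_nf
  rw [hre] at this
  linarith




private lemma barrier {x : ℝ → ℝ} {θ c : ℝ} (hc : 0 < c)
    (hx : ∀ᶠ t in atTop, ∃ v, HasDerivAt x v t ∧ (θ < x t → v ≤ -c)) :
    ∀ ε > (0:ℝ), ∀ᶠ t in atTop, x t ≤ θ + ε := by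
  intro ε hε
  obtain ⟨T, hT⟩ := eventually_atTop.1 hx
  have hcont : ∀ t ≥ T, ContinuousAt x t := fun t ht => (hT t ht).choose_spec.1.continuousAt
  -- Step (b): invariance of {x ≤ θ + ε}
  have hinv : ∀ s ≥ T, x s ≤ θ + ε → ∀ t ≥ s, x t ≤ θ + ε := by
    intro s hs hxs t hts
    by_contra hcon
    push_neg at hcon
    set A : Set ℝ := {u ∈ Icc s t | θ + ε < x u} with hA
    have htA : t ∈ A := ⟨⟨hts, le_refl t⟩, hcon⟩
    have hAne : A.Nonempty := ⟨t, htA⟩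
    have hAbdd : BddBelow A := ⟨s, fun u hu => hu.1.1⟩
    set τ := sInf A with hτ
    have hτs : s ≤ τ := le_csInf hAne fun u hu => hu.1.1
    have hτt : τ ≤ t := csInf_le hAbdd htA
    have hτT : T ≤ τ := le_trans hs hτs
    have hleft : ∀ u, s ≤ u → u < τ → x u ≤ θ + ε := by
      intro u hu1 hu2
      by_contra hxu
      push_neg at hxu
      exact absurd (csInf_le hAbdd ⟨⟨hu1, le_trans hu2.le hτt⟩, hxu⟩) (not_le.2 hu2)
    have hτnotA : τ ∉ A := by
      intro hmem
      have hxτ : θ + ε < x τ := hmem.2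
      have hsτ : s < τ := by
        rcases lt_or_eq_of_le hτs with h | h
        · exact h
        · exfalso; rw [← h] at hxτ; linarith
      have hev : ∀ᶠ u in nhds τ, θ + ε < x u :=
        (hcont τ hτT).eventually_const_lt hxτ
      have hev2 : ∀ᶠ u in nhdsWithin τ (Iio τ), (θ + ε < x u ∧ s < u) ∧ u ∈ Iio τ := by
        refine Eventually.and (Eventually.and ?_ ?_) self_mem_nhdsWithin
        · exact eventually_nhdsWithin_of_eventually_nhds hev
        · exact eventually_nhdsWithin_of_eventually_nhds (eventually_gt_nhds hsτ)
      obtain ⟨u, ⟨hu1, hu2⟩, hu3⟩ := hev2.exists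
      exact absurd (hleft u hu2.le hu3) (not_le.2 hu1)
    have hxτle : x τ ≤ θ + ε := by
      by_contra hgt
      push_neg at hgt
      exact hτnotA ⟨⟨hτs, hτt⟩, hgt⟩
    have hxτge : θ + ε ≤ x τ := by
      by_contra hlt
      push_neg at hlt
      have hev : ∀ᶠ u in nhds τ, x u < θ + ε := (hcont τ hτT).eventually_lt_const hlt
      obtain ⟨δ, hδ, hball⟩ := Metric.eventually_nhds_iff.1 hev
      have : τ + δ/2 ≤ τ := by
        refine le_csInf hAne fun u hu => ?_
        have huτ : τ ≤ u := csInf_le hAbdd hu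
        by_contra hult
        push_neg at hult
        have : dist u τ < δ := by
          rw [Real.dist_eq, abs_lt]; constructor <;> linarith
        exact absurd hu.2 (not_lt.2 (hball this).le)
      linarith
    have hxτeq : x τ = θ + ε := le_antisymm hxτle hxτge
    obtain ⟨v, hv, himp⟩ := hT τ hτT
    have hvc : v ≤ -c := himp (by linarith)
    have hslope : Tendsto (slope x τ) (nhdsWithin τ {τ}ᶜ) (nhds v) :=
      hasDerivAt_iff_tendsto_slope.1 hv
    have hslope2 : ∀ᶠ u in nhdsWithin τ (Ioi τ), slope x τ u < 0 :=
      ((hslope.mono_left (nhdsWithin_mono τ (fun u hu => ne_of_gt hu))).eventually_lt_const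
        (by linarith : v < 0))
    have hev3 : ∀ᶠ u in nhds τ, u ∈ Ioi τ → x u < θ + ε := by
      rw [← eventually_nhdsWithin_iff]
      filter_upwards [hslope2, self_mem_nhdsWithin] with u hu1 hu2
      have huτ : (0:ℝ) < u - τ := by simpa using sub_pos.2 (show τ < u from hu2)
      have heq : slope x τ u = (x u - x τ) / (u - τ) := slope_def_field x τ u
      rw [heq] at hu1
      rcases div_neg_iff.1 hu1 with ⟨h1, h2⟩ | ⟨h1, h2⟩
      · linarith
      · linarith
    obtain ⟨δ, hδ, hball⟩ := Metric.eventually_nhds_iff.1 hev3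
    have : τ + δ/2 ≤ τ := by
      refine le_csInf hAne fun u hu => ?_
      have huτ : τ ≤ u := csInf_le hAbdd hu
      have hune : u ≠ τ := fun h => hτnotA (h ▸ hu)
      have hugt : τ < u := lt_of_le_of_ne huτ (Ne.symm hune)
      by_contra hult
      push_neg at hult
      have : dist u τ < δ := by
        rw [Real.dist_eq, abs_lt]; constructor <;> linarith
      exact absurd hu.2 (not_lt.2 (hball this hugt).le)
    linarith
  -- Step (a): entry in finite time
  have hentry : ∃ s ≥ T, x s ≤ θ + ε := by
    by_contra hcon
    push_neg at hcon
    have hder : ∀ t ≥ T, ∃ v, HasDerivAt (fun u => x u + c * u) v t ∧ v ≤ 0 := by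
      intro t ht
      obtain ⟨v, hv, himp⟩ := hT t ht
      have hgt : θ < x t := by linarith [hcon t ht]
      refine ⟨v + c, by have := hv.add ((hasDerivAt_id' t).const_mul c); simp only [mul_one] at this; exact this, ?_⟩
      linarith [himp hgt]
    have hanti := antitone_from_deriv hder
    set t1 := max T ((x T + c * T - θ - ε) / c) + 1 with ht1
    have ht1T : T ≤ t1 := by
      rw [ht1]; linarith [le_max_left T ((x T + c * T - θ - ε) / c)]
    have h2 := hanti t1 ht1T
    have h3 : (x T + c * T - θ - ε) / c < t1 := by
      rw [ht1]; linarith [le_max_right T ((x T + c * T - θ - ε) / c)]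
    rw [div_lt_iff₀ hc] at h3
    nlinarith [hcon t1 ht1T, h2, h3]
  obtain ⟨s, hs, hxs⟩ := hentry
  exact eventually_atTop.2 ⟨s, fun t ht => hinv s hs hxs t ht⟩






private noncomputable def Nfun (H I_in : ℝ) (c : ℝ) : ℝ :=
  Real.log (H + I_in) - Real.log (H + I_in * Real.exp (-c))
private noncomputable def psi (H I_in : ℝ) (c : ℝ) : ℝ :=
  I_in / (I_in + H * Real.exp c)

private lemma N_hasDeriv {H I_in : ℝ} (hH : 0 < H) (hIin : 0 < I_in) (c : ℝ) :
    HasDerivAt (Nfun H I_in) (psi H I_in c) c := by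
  have hpos : (0:ℝ) < H + I_in * Real.exp (-c) := by positivity
  have h1 : HasDerivAt (fun c : ℝ => -c) (-1) c := (hasDerivAt_id c).neg
  have h2 := h1.exp
  have h3 := (h2.const_mul I_in).const_add H
  have h4 := h3.log (ne_of_gt hpos)
  have h5 := (hasDerivAt_const c (Real.log (H + I_in))).sub h4
  convert h5 using 1
  · rfl
  · rfl
  · rfl
  rw [psi, Real.exp_neg]
  have hne3 : Real.exp c ≠ 0 := (Real.exp_pos c).ne'
  have hrhs : (0:ℝ) - I_in * ((Real.exp c)⁻¹ * -1) / (H + I_in * (Real.exp c)⁻¹)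
      = (I_in * (Real.exp c)⁻¹) / (H + I_in * (Real.exp c)⁻¹) := by ring
  rw [hrhs, div_eq_div_iff (by positivity) (by positivity)]
  linear_combination (-(I_in * H)) * (mul_inv_cancel₀ hne3)

private lemma psi_hasDeriv {H I_in : ℝ} (c : ℝ) (hne : I_in + H * Real.exp c ≠ 0) :
    HasDerivAt (psi H I_in) ((0 * (I_in + H * Real.exp c) - I_in * (H * Real.exp c)) /
      (I_in + H * Real.exp c) ^ 2) c := by
  have hg : HasDerivAt (fun c : ℝ => I_in + H * Real.exp c) (H * Real.exp c) c := by
    simpa using ((Real.hasDerivAt_exp c).const_mul H).const_add I_in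
  exact (hasDerivAt_const c I_in).div hg hne

private lemma N_ge_mul_psi {H I_in : ℝ} (hH : 0 < H) (hIin : 0 < I_in) :
    ∀ c ≥ (0:ℝ), c * psi H I_in c ≤ Nfun H I_in c := by
  have hmono := monotone_from_deriv (y := fun c => Nfun H I_in c - c * psi H I_in c) (t0 := 0) ?_
  · intro c hc
    have := hmono c hc
    have h0 : Nfun H I_in 0 - 0 * psi H I_in 0 = 0 := by
      simp [Nfun]
    rw [h0] at this; linarith
  · intro c hc
    have hN := N_hasDeriv hH hIin c
    have hne : I_in + H * Real.exp c ≠ 0 := by positivity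
    have hψ := psi_hasDeriv c hne
    have hprod := (hasDerivAt_id c).mul hψ
    refine ⟨_, hN.sub hprod, ?_⟩
    have hψ' : (0 * (I_in + H * Real.exp c) - I_in * (H * Real.exp c)) /
        (I_in + H * Real.exp c) ^ 2 ≤ 0 := by
      apply div_nonpos_of_nonpos_of_nonneg
      · simp only [zero_mul, zero_sub, neg_nonpos]
        positivity
      · positivity
    simp only [id_eq, one_mul]
    nlinarith [mul_nonpos_of_nonneg_of_nonpos hc hψ']

private lemma phi_anti {H I_in : ℝ} (hH : 0 < H) (hIin : 0 < I_in) :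
    ∀ c1 c2 : ℝ, 0 < c1 → c1 ≤ c2 →
    Nfun H I_in c2 / c2 ≤ Nfun H I_in c1 / c1 := by
  intro c1 c2 hc1 hc12
  refine antitone_from_deriv (y := fun c => Nfun H I_in c / c) (t0 := c1) ?_ c2 hc12
  intro c hc
  have hcpos : 0 < c := lt_of_lt_of_le hc1 hc
  have hN := N_hasDeriv hH hIin c
  have hd := hN.div (hasDerivAt_id c) (ne_of_gt hcpos)
  refine ⟨_, hd, ?_⟩
  apply div_nonpos_of_nonpos_of_nonneg
  · have := N_ge_mul_psi hH hIin c hcpos.le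
    simp only [id_eq, mul_one]
    nlinarith
  · positivity

private lemma hfun_eq {H I_in z_m k K_bg : ℝ} (hH : 0 < H) (hIin : 0 < I_in) (B : ℝ) :
    hfun z_m k K_bg H I_in B
      = Nfun H I_in (z_m * (k * B + K_bg)) / (z_m * (k * B + K_bg)) := by
  rw [hfun, Nfun, lightI]
  have h1 : (0:ℝ) < H + I_in := by positivity
  have h2 : (0:ℝ) < H + I_in * Real.exp (-((K_bg + k * B) * z_m)) := by positivity
  rw [Real.log_div (ne_of_gt h1) (ne_of_gt h2)]
  ring_nf

private lemma hfun_pos {H I_in z_m k K_bg : ℝ} (hH : 0 < H) (hIin : 0 < I_in)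
    (hzm : 0 < z_m) (hk : 0 < k) (hKbg : 0 < K_bg) (B : ℝ) (hB : 0 ≤ B) :
    0 < hfun z_m k K_bg H I_in B := by
  rw [hfun_eq hH hIin]
  have hc : 0 < z_m * (k * B + K_bg) := by positivity
  apply div_pos _ hc
  rw [Nfun]
  have he : Real.exp (-(z_m * (k * B + K_bg))) < 1 := by
    rw [Real.exp_lt_one_iff]; linarith
  have hlt : H + I_in * Real.exp (-(z_m * (k * B + K_bg))) < H + I_in := by
    nlinarith [he, hIin]
  have h2 : (0:ℝ) < H + I_in * Real.exp (-(z_m * (k * B + K_bg))) := by positivity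
  linarith [Real.log_lt_log h2 hlt]

private lemma hfun_anti {H I_in z_m k K_bg : ℝ} (hH : 0 < H) (hIin : 0 < I_in)
    (hzm : 0 < z_m) (hk : 0 < k) (hKbg : 0 < K_bg) {B1 B2 : ℝ}
    (hB1 : 0 ≤ B1) (hB12 : B1 ≤ B2) :
    hfun z_m k K_bg H I_in B2 ≤ hfun z_m k K_bg H I_in B1 := by
  rw [hfun_eq hH hIin, hfun_eq hH hIin]
  apply phi_anti hH hIin
  · positivity
  · nlinarith [mul_nonneg (mul_nonneg hzm.le hk.le) (sub_nonneg.2 hB12)]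

private lemma hfun_contAt {H I_in z_m k K_bg : ℝ} (hH : 0 < H) (hIin : 0 < I_in)
    (hzm : 0 < z_m) (hk : 0 < k) (hKbg : 0 < K_bg) (b : ℝ) (hb : 0 ≤ b) :
    ContinuousAt (hfun z_m k K_bg H I_in) b := by
  have h2 : ∀ B : ℝ, (0:ℝ) < H + lightI I_in K_bg k z_m B := by
    intro B; rw [lightI]; positivity
  have hquot : ContinuousAt (fun B : ℝ => (H + I_in) / (H + lightI I_in K_bg k z_m B)) b := by
    apply ContinuousAt.div continuousAt_const
    · simp only [lightI]; fun_prop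
    · exact ne_of_gt (h2 b)
  have hlog := hquot.log (ne_of_gt (div_pos (by positivity) (h2 b)))
  apply hlog.div (by fun_prop)
  positivity




private lemma const_from_deriv {y : ℝ → ℝ}
    (h : ∀ t ≥ (0:ℝ), ∃ v, HasDerivAt y v t ∧ v = 0) :
    ∀ t ≥ (0:ℝ), y t = y 0 := by
  intro t ht
  have h1 := antitone_from_deriv (fun t ht => ⟨_, (h t ht).choose_spec.1, le_of_eq (h t ht).choose_spec.2⟩) t ht
  have h2 := monotone_from_deriv (fun t ht => ⟨_, (h t ht).choose_spec.1, ge_of_eq (h t ht).choose_spec.2⟩) t ht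
  linarith

-- rho coefficient and quasi-equilibrium quota
noncomputable def rcoef (ρ_m Q_m Q_M M : ℝ) (p : ℝ) : ℝ :=
  ρ_m / (Q_M - Q_m) * (p / (p + M))
noncomputable def Qst (r ρ_m Q_m Q_M M : ℝ) (η p : ℝ) : ℝ :=
  (rcoef ρ_m Q_m Q_M M p * Q_M + r * η * Q_m) / (rcoef ρ_m Q_m Q_M M p + r * η)



section rho
variable {ρ_m Q_m Q_M M : ℝ} (hρm : 0 < ρ_m) (hQm : 0 < Q_m) (hQmM : Q_m < Q_M) (hM : 0 < M)
include hρm hQm hQmM hM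

private lemma rcoef_nonneg {p : ℝ} (hp : 0 ≤ p) : 0 ≤ rcoef ρ_m Q_m Q_M M p := by
  rw [rcoef]; have : 0 < Q_M - Q_m := by linarith
  positivity

private lemma rho_le {Q P p : ℝ} (hQ : Q ≤ Q_M) (hP : 0 ≤ P) (hPp : P ≤ p) :
    rhofun ρ_m Q_m Q_M M Q P ≤ rcoef ρ_m Q_m Q_M M p * (Q_M - Q) := by
  rw [rhofun, rcoef]
  have h1 : 0 < Q_M - Q_m := by linarith
  have h2 : 0 < P + M := by linarith
  have h3 : 0 < p + M := by linarith
  have hmono : P / (P + M) ≤ p / (p + M) := by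
    rw [div_le_div_iff₀ h2 h3]; nlinarith
  have h4 : 0 ≤ P / (P + M) := by positivity
  have h5 : 0 ≤ Q_M - Q := by linarith
  have heq : ρ_m * ((Q_M - Q) / (Q_M - Q_m)) * (P / (P + M))
      = (ρ_m / (Q_M - Q_m) * (P / (P + M))) * (Q_M - Q) := by ring
  rw [heq]
  apply mul_le_mul_of_nonneg_right _ h5
  apply mul_le_mul_of_nonneg_left hmono (by positivity)

private lemma rho_ge {Q P p : ℝ} (hQ : Q ≤ Q_M) (hp : 0 ≤ p) (hPp : p ≤ P) :
    rcoef ρ_m Q_m Q_M M p * (Q_M - Q) ≤ rhofun ρ_m Q_m Q_M M Q P := by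
  rw [rhofun, rcoef]
  have h1 : 0 < Q_M - Q_m := by linarith
  have h2 : 0 < P + M := by linarith
  have h3 : 0 < p + M := by linarith
  have hmono : p / (p + M) ≤ P / (P + M) := by
    rw [div_le_div_iff₀ h3 h2]; nlinarith
  have h5 : 0 ≤ Q_M - Q := by linarith
  have heq : ρ_m * ((Q_M - Q) / (Q_M - Q_m)) * (P / (P + M))
      = (ρ_m / (Q_M - Q_m) * (P / (P + M))) * (Q_M - Q) := by ring
  rw [heq]
  apply mul_le_mul_of_nonneg_right _ h5
  apply mul_le_mul_of_nonneg_left hmono (by positivity)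

private lemma Qst_ge_Qm {r η p : ℝ} (hr : 0 < r) (hη : 0 < η) (hp : 0 ≤ p) :
    Q_m ≤ Qst r ρ_m Q_m Q_M M η p := by
  rw [Qst]
  set ρc := rcoef ρ_m Q_m Q_M M p with hρc
  have hρc0 : 0 ≤ ρc := rcoef_nonneg hρm hQm hQmM hM hp
  rw [le_div_iff₀ (by positivity)]
  nlinarith [mul_nonneg hρc0 (sub_nonneg.2 hQmM.le)]

/-- the key monotone algebra: if `q ≤ Qst η p` and `η ≤ η0` then the per-capita growth
at quota bound `q` and light `η` is below the one at `η0, Qst η0 p`. -/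
private lemma key_alg {r η η0 q μ p : ℝ} (hr : 0 < r) (hη : 0 < η) (hηle : η ≤ η0)
    (hp : 0 ≤ p) (hq : Q_m ≤ q) (hqle : q ≤ Qst r ρ_m Q_m Q_M M η p)
    (hμ : r * η0 * (1 - Q_m / Qst r ρ_m Q_m Q_M M η0 p) < μ) :
    r * η * (1 - Q_m / q) < μ := by
  set ρc := rcoef ρ_m Q_m Q_M M p with hρc
  have hρc0 : 0 ≤ ρc := rcoef_nonneg hρm hQm hQmM hM hp
  have hη0 : 0 < η0 := lt_of_lt_of_le hη hηle
  have hD : 0 < ρc + r * η := by positivity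
  have hD0 : 0 < ρc + r * η0 := by positivity
  have hNs : 0 < ρc * Q_M + r * η * Q_m := by nlinarith
  have hNs0 : 0 < ρc * Q_M + r * η0 * Q_m := by nlinarith
  have hqpos : 0 < q := lt_of_lt_of_le hQm hq
  have hQstpos : 0 < Qst r ρ_m Q_m Q_M M η p := lt_of_lt_of_le hQm (Qst_ge_Qm hρm hQm hQmM hM hr hη hp)
  have step1 : r * η * (1 - Q_m / q) ≤ r * η * (1 - Q_m / Qst r ρ_m Q_m Q_M M η p) := by
    have h := div_le_div_of_nonneg_left hQm.le hqpos hqle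
    have h2 := mul_le_mul_of_nonneg_left h (show (0:ℝ) ≤ r * η by positivity)
    linarith
  have hQst_eq : ∀ x : ℝ, 0 < x → (1 - Q_m / Qst r ρ_m Q_m Q_M M x p)
      = ρc * (Q_M - Q_m) / (ρc * Q_M + r * x * Q_m) := by
    intro x hx
    rw [Qst, ← hρc]
    have hDx : ρc + r * x ≠ 0 := by positivity
    have hNx : ρc * Q_M + r * x * Q_m ≠ 0 := by
      have := mul_pos (mul_pos hr hx) hQm
      have := mul_nonneg hρc0 (lt_trans hQm hQmM).le
      nlinarith
    rw [div_div_eq_mul_div, one_sub_div hNx]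
    congr 1; ring
  have step2 : r * η * (1 - Q_m / Qst r ρ_m Q_m Q_M M η p)
      ≤ r * η0 * (1 - Q_m / Qst r ρ_m Q_m Q_M M η0 p) := by
    rw [hQst_eq η hη, hQst_eq η0 hη0]
    have hkey : r * η * (ρc * (Q_M - Q_m)) * (ρc * Q_M + r * η0 * Q_m)
        ≤ r * η0 * (ρc * (Q_M - Q_m)) * (ρc * Q_M + r * η * Q_m) := by
      have hfact : 0 ≤ r * ρc * (Q_M - Q_m) * (ρc * Q_M) * (η0 - η) := by
        have h1 : (0:ℝ) ≤ Q_M - Q_m := by linarith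
        have h2 : (0:ℝ) ≤ η0 - η := by linarith
        have h3 : (0:ℝ) ≤ Q_M := by linarith
        positivity
      nlinarith [hfact]
    calc r * η * (ρc * (Q_M - Q_m) / (ρc * Q_M + r * η * Q_m))
        = r * η * (ρc * (Q_M - Q_m)) / (ρc * Q_M + r * η * Q_m) := by ring
      _ ≤ r * η0 * (ρc * (Q_M - Q_m)) / (ρc * Q_M + r * η0 * Q_m) := by
          rw [div_le_div_iff₀ hNs hNs0]; nlinarith [hkey]
      _ = r * η0 * (ρc * (Q_M - Q_m) / (ρc * Q_M + r * η0 * Q_m)) := by ring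
  linarith
end rho

end helpers

/-- A differentiable solution of the spatially homogeneous system that stays in
the region `{B ≥ 0, Q_m ≤ Q ≤ Q_M, P ≥ 0}` for all `t ≥ 0`. -/
def IsRegionSol (r Q_m Q_M z_m k K_bg H I_in l D ρ_m M P_h : ℝ)
    (B Q P : ℝ → ℝ) : Prop :=
  (∀ t ≥ (0:ℝ), HasDerivAt B
    (Ufun r Q_m Q_M z_m k K_bg H I_in l D ρ_m M (B t) (Q t) (P t)) t) ∧
  (∀ t ≥ (0:ℝ), HasDerivAt Q
    (Vfun r Q_m Q_M z_m k K_bg H I_in l D ρ_m M (B t) (Q t) (P t)) t) ∧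
  (∀ t ≥ (0:ℝ), HasDerivAt P
    (Wfun r Q_m Q_M z_m k K_bg H I_in l D ρ_m M P_h (B t) (Q t) (P t)) t) ∧
  (∀ t ≥ (0:ℝ), 0 ≤ B t ∧ Q_m ≤ Q t ∧ Q t ≤ Q_M ∧ 0 ≤ P t)


section mainlemmas
open Filter Set
set_option linter.unusedSectionVars false
set_option maxHeartbeats 1000000

variable {r Q_m Q_M z_m k K_bg H I_in l D ρ_m M P_h : ℝ} {B Q P : ℝ → ℝ}

private lemma T_formula
    (hsol : IsRegionSol r Q_m Q_M z_m k K_bg H I_in l D ρ_m M P_h B Q P) :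
    ∀ t ≥ (0:ℝ), P t + B t * Q t
      = P_h + (P 0 + B 0 * Q 0 - P_h) * Real.exp (-(D / z_m * t)) := by
  obtain ⟨hB, hQ, hP, hreg⟩ := hsol
  have hTd : ∀ t ≥ (0:ℝ), HasDerivAt (fun t => P t + B t * Q t)
      (D / z_m * (P_h - (P t + B t * Q t))) t := by
    intro t ht
    have hder := (hP t ht).add ((hB t ht).mul (hQ t ht))
    convert hder using 1
    · rfl
    · rfl
    · rfl
    simp only [Ufun, Vfun, Wfun]
    ring
  have hyd : ∀ t ≥ (0:ℝ), ∃ v, HasDerivAt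
      (fun t => (P t + B t * Q t - P_h) * Real.exp (D / z_m * t)) v t ∧ v = 0 := by
    intro t ht
    have he : HasDerivAt (fun t : ℝ => Real.exp (D / z_m * t))
        (D / z_m * Real.exp (D / z_m * t)) t := by
      simpa [mul_comm] using ((hasDerivAt_id t).const_mul (D / z_m)).exp
    refine ⟨_, ((hTd t ht).sub_const P_h).mul he, ?_⟩
    ring
  have hconst := const_from_deriv hyd
  intro t ht
  have hc := hconst t ht
  simp only [mul_zero, Real.exp_zero, mul_one] at hc
  have h3 : (P t + B t * Q t - P_h) * Real.exp (D / z_m * t) * Real.exp (-(D / z_m * t))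
      = (P 0 + B 0 * Q 0 - P_h) * Real.exp (-(D / z_m * t)) := by rw [hc]
  rw [mul_assoc, ← Real.exp_add] at h3
  simp only [add_neg_cancel, Real.exp_zero, mul_one] at h3
  linarith

private lemma attract_lemma
    (hr : 0 < r) (hQm : 0 < Q_m) (hQM : 0 < Q_M) (hzm : 0 < z_m) (hk : 0 < k)
    (hKbg : 0 < K_bg) (hH : 0 < H) (hIin : 0 < I_in) (hl : 0 < l) (hD : 0 < D)
    (hρm : 0 < ρ_m) (hM : 0 < M) (hQmM : Q_m < Q_M) (hPh : 0 ≤ P_h)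
    (hR0 : R0 r Q_m Q_M z_m k K_bg H I_in l D ρ_m M P_h < 1)
    (hsol : IsRegionSol r Q_m Q_M z_m k K_bg H I_in l D ρ_m M P_h B Q P) :
    Tendsto (fun t => (B t, Q t, P t)) atTop
      (nhds ((0:ℝ), Qhat r Q_m Q_M z_m k K_bg H I_in ρ_m M P_h, P_h)) := by
  have hTf := T_formula hsol
  obtain ⟨hB, hQ, hP, hreg⟩ := hsol
  have hd : 0 < D / z_m := div_pos hD hzm
  have hμ : 0 < l + D / z_m := by linarith
  have hh : ∀ b ≥ (0:ℝ), 0 < hfun z_m k K_bg H I_in b :=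
    fun b hb => hfun_pos hH hIin hzm hk hKbg b hb
  have hhanti : ∀ {b1 b2 : ℝ}, 0 ≤ b1 → b1 ≤ b2 →
      hfun z_m k K_bg H I_in b2 ≤ hfun z_m k K_bg H I_in b1 :=
    fun h1 h2 => hfun_anti hH hIin hzm hk hKbg h1 h2
  have hR0' : r * hfun z_m k K_bg H I_in 0 *
      (1 - Q_m / Qhat r Q_m Q_M z_m k K_bg H I_in ρ_m M P_h) < l + D / z_m := by
    rw [R0] at hR0
    exact (div_lt_one hμ).1 hR0
  have hQhat_eq : Qhat r Q_m Q_M z_m k K_bg H I_in ρ_m M P_h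
      = Qst r ρ_m Q_m Q_M M (hfun z_m k K_bg H I_in 0) P_h := rfl
  set Tmax : ℝ := max (P 0 + B 0 * Q 0) P_h with hTmax_def
  have hTub : ∀ t ≥ (0:ℝ), P t + B t * Q t ≤ Tmax := by
    intro t ht
    rw [hTf t ht]
    have he1 : Real.exp (-(D / z_m * t)) ≤ 1 := by
      rw [Real.exp_le_one_iff]
      have := mul_nonneg hd.le ht
      linarith
    have he0 : 0 < Real.exp (-(D / z_m * t)) := Real.exp_pos _
    rcases le_total (P 0 + B 0 * Q 0 - P_h) 0 with hC | hC
    · have : (P 0 + B 0 * Q 0 - P_h) * Real.exp (-(D / z_m * t)) ≤ 0 :=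
        mul_nonpos_of_nonpos_of_nonneg hC he0.le
      have := le_max_right (P 0 + B 0 * Q 0) P_h
      linarith
    · have : (P 0 + B 0 * Q 0 - P_h) * Real.exp (-(D / z_m * t)) ≤ P 0 + B 0 * Q 0 - P_h := by
        nlinarith
      have := le_max_left (P 0 + B 0 * Q 0) P_h
      linarith
  have hBub : ∀ t ≥ (0:ℝ), B t ≤ Tmax / Q_m := by
    intro t ht
    obtain ⟨h1, h2, h3, h4⟩ := hreg t ht
    have h5 : B t * Q_m ≤ B t * Q t := mul_le_mul_of_nonneg_left h2 h1
    have h6 := hTub t ht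
    rw [le_div_iff₀ hQm]
    linarith
  have hPev : ∀ ε > (0:ℝ), ∀ᶠ t in atTop, P t ≤ P_h + ε := by
    intro ε hε
    filter_upwards [exp_decay_ev |P 0 + B 0 * Q 0 - P_h| (D / z_m) ε hd hε,
      eventually_ge_atTop (0:ℝ)] with t h1 h2
    have h3 := hTf t h2
    obtain ⟨hb1, hb2, hb3, hb4⟩ := hreg t h2
    have h4 : (P 0 + B 0 * Q 0 - P_h) * Real.exp (-(D / z_m * t))
        ≤ |P 0 + B 0 * Q 0 - P_h| * Real.exp (-(D / z_m * t)) :=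
      mul_le_mul_of_nonneg_right (le_abs_self _) (Real.exp_pos _).le
    linarith [mul_nonneg hb1 (le_trans hQm.le hb2)]
  -- eventual upper bounds : b⁺ and q⁺
  set UB : Set ℝ := {θ | ∀ᶠ t in atTop, B t ≤ θ} with hUB_def
  have hUBmem : Tmax / Q_m ∈ UB := by
    filter_upwards [eventually_ge_atTop (0:ℝ)] with t ht using hBub t ht
  have hUBlb : ∀ θ ∈ UB, (0:ℝ) ≤ θ := by
    intro θ hθ
    obtain ⟨t, h1, h2⟩ := (hθ.and (eventually_ge_atTop (0:ℝ))).exists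
    linarith [(hreg t h2).1]
  have hUBbdd : BddBelow UB := ⟨0, hUBlb⟩
  have hUBne : UB.Nonempty := ⟨_, hUBmem⟩
  set bp := sInf UB with hbp_def
  have hbp0 : 0 ≤ bp := le_csInf hUBne hUBlb
  have hbpev : ∀ ε > (0:ℝ), ∀ᶠ t in atTop, B t ≤ bp + ε := by
    intro ε hε
    obtain ⟨θ, hθU, hθlt⟩ := exists_lt_of_csInf_lt hUBne (by linarith : sInf UB < bp + ε)
    exact hθU.mono fun t ht => le_trans ht hθlt.le
  set UQ : Set ℝ := {θ | ∀ᶠ t in atTop, Q t ≤ θ} with hUQ_def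
  have hUQmem : Q_M ∈ UQ := by
    filter_upwards [eventually_ge_atTop (0:ℝ)] with t ht using (hreg t ht).2.2.1
  have hUQlb : ∀ θ ∈ UQ, Q_m ≤ θ := by
    intro θ hθ
    obtain ⟨t, h1, h2⟩ := (hθ.and (eventually_ge_atTop (0:ℝ))).exists
    linarith [(hreg t h2).2.1]
  have hUQbdd : BddBelow UQ := ⟨Q_m, hUQlb⟩
  have hUQne : UQ.Nonempty := ⟨_, hUQmem⟩
  set qp := sInf UQ with hqp_def
  have hqpm : Q_m ≤ qp := le_csInf hUQne hUQlb
  have hqppos : 0 < qp := lt_of_lt_of_le hQm hqpm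
  have hqpev : ∀ ε > (0:ℝ), ∀ᶠ t in atTop, Q t ≤ qp + ε := by
    intro ε hε
    obtain ⟨θ, hθU, hθlt⟩ := exists_lt_of_csInf_lt hUQne (by linarith : sInf UQ < qp + ε)
    exact hθU.mono fun t ht => le_trans ht hθlt.le
  -- the Q-comparison, for arbitrary eventual bounds on B and P
  have hQcomp : ∀ σ σP : ℝ, 0 < σ → 0 < σP → (∀ᶠ t in atTop, B t ≤ σ) →
      ∀ ε' > (0:ℝ), ∀ᶠ t in atTop, Q t ≤
        Qst r ρ_m Q_m Q_M M (hfun z_m k K_bg H I_in σ) (P_h + σP) + ε' := by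
    intro σ σP hσ hσP hBev
    set η := hfun z_m k K_bg H I_in σ with hη_def
    have hη : 0 < η := hh σ hσ.le
    set ρc := rcoef ρ_m Q_m Q_M M (P_h + σP) with hρc_def
    have hρc : 0 ≤ ρc := rcoef_nonneg hρm hQm hQmM hM (by linarith)
    have hbb : 0 < ρc + r * η := by positivity
    have hev : ∀ᶠ t in atTop, ∃ v, HasDerivAt Q v t ∧
        v ≤ (ρc * Q_M + r * η * Q_m) - (ρc + r * η) * Q t := by
      filter_upwards [hBev, hPev σP hσP, eventually_ge_atTop (0:ℝ)] with t h1 h2 h3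
      refine ⟨_, hQ t h3, ?_⟩
      obtain ⟨hB0, hQm', hQM', hP0⟩ := hreg t h3
      have hQne : Q t ≠ 0 := ne_of_gt (lt_of_lt_of_le hQm hQm')
      have hVeq : Vfun r Q_m Q_M z_m k K_bg H I_in l D ρ_m M (B t) (Q t) (P t)
          = rhofun ρ_m Q_m Q_M M (Q t) (P t)
            - r * (Q t - Q_m) * hfun z_m k K_bg H I_in (B t) := by
        simp only [Vfun]; field_simp
      rw [hVeq]
      have h4 : rhofun ρ_m Q_m Q_M M (Q t) (P t) ≤ ρc * (Q_M - Q t) :=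
        rho_le hρm hQm hQmM hM hQM' hP0 h2
      have h5 : η ≤ hfun z_m k K_bg H I_in (B t) := hhanti hB0 h1
      have h6 : r * (Q t - Q_m) * η ≤ r * (Q t - Q_m) * hfun z_m k K_bg H I_in (B t) :=
        mul_le_mul_of_nonneg_left h5 (mul_nonneg hr.le (by linarith))
      have heq : (ρc * Q_M + r * η * Q_m) - (ρc + r * η) * Q t
          = ρc * (Q_M - Q t) - r * (Q t - Q_m) * η := by ring
      linarith [h4, h6, heq]
    intro ε' hε'
    have := lin_comp_ev hbb hev ε' hε'
    rw [Qst]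
    exact this
  have claim1 : ∀ ε > (0:ℝ), qp ≤
      Qst r ρ_m Q_m Q_M M (hfun z_m k K_bg H I_in (bp + ε)) (P_h + ε) := by
    intro ε hε
    refine le_of_forall_pos_le_add fun ε' hε' => ?_
    exact csInf_le hUQbdd (hQcomp (bp + ε) ε (by linarith) hε (hbpev ε hε) ε' hε')
  -- continuity of the Qst expressions
  have hrc_cont : ∀ g : ℝ → ℝ, ContinuousAt g 0 → 0 ≤ g 0 →
      ContinuousAt (fun σ : ℝ => rcoef ρ_m Q_m Q_M M (g σ)) 0 := by
    intro g hg hg0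
    simp only [rcoef]
    apply ContinuousAt.mul continuousAt_const
    apply ContinuousAt.div hg (hg.add continuousAt_const)
    have : 0 < g 0 + M := by linarith
    exact ne_of_gt this
  have hQst_cont : ∀ gη gp : ℝ → ℝ, ContinuousAt gη 0 → ContinuousAt gp 0 →
      0 < gη 0 → 0 ≤ gp 0 →
      ContinuousAt (fun σ : ℝ => Qst r ρ_m Q_m Q_M M (gη σ) (gp σ)) 0 := by
    intro gη gp hgη hgp hη0 hp0
    have hrc := hrc_cont gp hgp hp0
    have hrc0 : 0 ≤ rcoef ρ_m Q_m Q_M M (gp 0) := rcoef_nonneg hρm hQm hQmM hM hp0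
    simp only [Qst]
    apply ContinuousAt.div
    · exact (hrc.mul continuousAt_const).add ((hgη.const_mul r).mul continuousAt_const)
    · exact hrc.add (hgη.const_mul r)
    · have : 0 < rcoef ρ_m Q_m Q_M M (gp 0) + r * gη 0 := by nlinarith
      exact ne_of_gt this
  have hbpcont : ContinuousAt (fun σ : ℝ => hfun z_m k K_bg H I_in (bp + σ)) 0 := by
    have h1 : ContinuousAt (fun σ : ℝ => bp + σ) 0 := by fun_prop
    have h2 : ContinuousAt (hfun z_m k K_bg H I_in) (bp + 0) := by
      rw [add_zero]; exact hfun_contAt hH hIin hzm hk hKbg bp hbp0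
    exact h2.comp h1
  have claim2 : qp ≤ Qst r ρ_m Q_m Q_M M (hfun z_m k K_bg H I_in bp) P_h := by
    have hcont : ContinuousAt (fun σ : ℝ =>
        Qst r ρ_m Q_m Q_M M (hfun z_m k K_bg H I_in (bp + σ)) (P_h + σ)) 0 := by
      apply hQst_cont _ _ hbpcont (by fun_prop)
      · rw [add_zero]; exact hh bp hbp0
      · rw [add_zero]; exact hPh
    have hev : ∀ᶠ σ in nhdsWithin (0:ℝ) (Ioi 0), qp ≤
        Qst r ρ_m Q_m Q_M M (hfun z_m k K_bg H I_in (bp + σ)) (P_h + σ) :=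
      eventually_nhdsWithin_of_forall fun σ hσ => claim1 σ hσ
    have := ge_of_tendsto (hcont.tendsto.mono_left nhdsWithin_le_nhds) hev
    simpa using this
  -- b⁺ = 0
  have hbple : bp ≤ 0 := by
    by_contra hbppos'
    push_neg at hbppos'
    have hsub : ∀ θ : ℝ, 0 < θ → θ < bp → ∀ ε > (0:ℝ),
        l + D / z_m ≤ r * hfun z_m k K_bg H I_in θ * (1 - Q_m / (qp + ε)) := by
      intro θ hθ1 hθ2 ε hε
      by_contra hlt
      push_neg at hlt
      set g := r * hfun z_m k K_bg H I_in θ * (1 - Q_m / (qp + ε)) with hg_def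
      have hcpos : 0 < θ * ((l + D / z_m) - g) := by
        apply mul_pos hθ1; linarith
      have hbar : ∀ ε' > (0:ℝ), ∀ᶠ t in atTop, B t ≤ θ + ε' := by
        apply barrier hcpos
        filter_upwards [hqpev ε hε, eventually_ge_atTop (0:ℝ)] with t h1 h3
        refine ⟨_, hB t h3, fun hgt => ?_⟩
        obtain ⟨hB0, hQm', hQM', hP0⟩ := hreg t h3
        have hQtpos : 0 < Q t := lt_of_lt_of_le hQm hQm'
        have hqe : 0 < qp + ε := by linarith
        have hh1 : hfun z_m k K_bg H I_in (B t) ≤ hfun z_m k K_bg H I_in θ :=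
          hhanti hθ1.le hgt.le
        have key1 : 0 ≤ 1 - Q_m / Q t := by
          have : Q_m / Q t ≤ 1 := by rw [div_le_one hQtpos]; linarith
          linarith
        have key2 : 1 - Q_m / Q t ≤ 1 - Q_m / (qp + ε) := by
          have : Q_m / (qp + ε) ≤ Q_m / Q t :=
            div_le_div_of_nonneg_left hQm.le hQtpos h1
          linarith
        have hhB0 : 0 ≤ hfun z_m k K_bg H I_in (B t) := (hh (B t) hB0).le
        have key3 : (1 - Q_m / Q t) * hfun z_m k K_bg H I_in (B t)
            ≤ (1 - Q_m / (qp + ε)) * hfun z_m k K_bg H I_in θ := by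
          apply mul_le_mul key2 hh1 hhB0
          linarith
        have key4 : r * (1 - Q_m / Q t) * hfun z_m k K_bg H I_in (B t) - (l + D / z_m)
            ≤ g - (l + D / z_m) := by
          rw [hg_def]
          have := mul_le_mul_of_nonneg_left key3 hr.le
          linarith
        have key5 : B t * (g - (l + D / z_m)) ≤ θ * (g - (l + D / z_m)) :=
          mul_le_mul_of_nonpos_right hgt.le (by linarith)
        have hUeq : Ufun r Q_m Q_M z_m k K_bg H I_in l D ρ_m M (B t) (Q t) (P t)
            = B t * (r * (1 - Q_m / Q t) * hfun z_m k K_bg H I_in (B t) - (l + D / z_m)) := by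
          simp only [Ufun]; ring
        rw [hUeq]
        have key6 : B t * (r * (1 - Q_m / Q t) * hfun z_m k K_bg H I_in (B t) - (l + D / z_m))
            ≤ B t * (g - (l + D / z_m)) := by
          apply mul_le_mul_of_nonneg_left key4 hB0
        have : θ * (g - (l + D / z_m)) = -(θ * ((l + D / z_m) - g)) := by ring
        linarith
      have hble : bp ≤ θ := by
        refine le_of_forall_pos_le_add fun ε' hε' => ?_
        exact csInf_le hUBbdd (hbar ε' hε')
      linarith
    -- pass to the limit θ → bp, ε → 0
    have hGcont : ContinuousAt (fun σ : ℝ =>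
        r * hfun z_m k K_bg H I_in (bp - σ) * (1 - Q_m / (qp + σ))) 0 := by
      have h1 : ContinuousAt (fun σ : ℝ => hfun z_m k K_bg H I_in (bp - σ)) 0 := by
        have ha : ContinuousAt (fun σ : ℝ => bp - σ) 0 := by fun_prop
        have hb2 : ContinuousAt (hfun z_m k K_bg H I_in) (bp - 0) := by
          rw [sub_zero]; exact hfun_contAt hH hIin hzm hk hKbg bp hbp0
        exact hb2.comp ha
      have h2 : ContinuousAt (fun σ : ℝ => 1 - Q_m / (qp + σ)) 0 := by
        apply ContinuousAt.sub continuousAt_const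
        apply ContinuousAt.div continuousAt_const (by fun_prop)
        rw [add_zero]; exact ne_of_gt hqppos
      exact (h1.const_mul r).mul h2
    have hμle : l + D / z_m ≤ r * hfun z_m k K_bg H I_in bp * (1 - Q_m / qp) := by
      have hev : ∀ᶠ σ in nhdsWithin (0:ℝ) (Ioi 0), l + D / z_m ≤
          r * hfun z_m k K_bg H I_in (bp - σ) * (1 - Q_m / (qp + σ)) := by
        have hmem : Ioo (0:ℝ) bp ∈ nhdsWithin (0:ℝ) (Ioi 0) :=
          Ioo_mem_nhdsGT_of_mem ⟨le_refl 0, hbppos'⟩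
        filter_upwards [hmem] with σ hσ
        exact hsub (bp - σ) (by linarith [hσ.2]) (by linarith [hσ.1]) σ hσ.1
      have := ge_of_tendsto (hGcont.tendsto.mono_left nhdsWithin_le_nhds) hev
      simpa using this
    have hfin := key_alg hρm hQm hQmM hM hr (hh bp hbp0)
      (hhanti (le_refl 0) hbp0) hPh hqpm claim2 (by rw [← hQhat_eq]; exact hR0')
    linarith
  have hbp_eq : bp = 0 := le_antisymm hbple hbp0
  -- B → 0
  have hBtend : Tendsto B atTop (nhds 0) := by
    rw [Metric.tendsto_atTop]
    intro ε hε
    obtain ⟨T1, hT1⟩ := eventually_atTop.1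
      ((hbpev (ε/2) (by linarith)).and (eventually_ge_atTop (0:ℝ)))
    refine ⟨T1, fun t ht => ?_⟩
    obtain ⟨h1, h2⟩ := hT1 t ht
    rw [Real.dist_eq, abs_sub_lt_iff]
    constructor
    · rw [hbp_eq] at h1; linarith
    · linarith [(hreg t h2).1]
  -- T → P_h
  have hTtend : Tendsto (fun t => P t + B t * Q t) atTop (nhds P_h) := by
    have h1 : Tendsto (fun t : ℝ => P_h + (P 0 + B 0 * Q 0 - P_h) * Real.exp (-(D / z_m * t)))
        atTop (nhds (P_h + 0)) := by
      apply Tendsto.const_add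
      have h2 : Tendsto (fun t : ℝ => D / z_m * t) atTop atTop :=
        Tendsto.const_mul_atTop hd tendsto_id
      have h3 : Tendsto (fun t : ℝ => -(D / z_m * t)) atTop atBot := tendsto_neg_atBot_iff.2 h2
      simpa using (Real.tendsto_exp_atBot.comp h3).const_mul (P 0 + B 0 * Q 0 - P_h)
    rw [add_zero] at h1
    apply h1.congr'
    filter_upwards [eventually_ge_atTop (0:ℝ)] with t ht
    exact (hTf t ht).symm
  -- BQ → 0
  have hBQtend : Tendsto (fun t => B t * Q t) atTop (nhds 0) := by
    apply squeeze_zero' (g := fun t => Q_M * B t)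
    · filter_upwards [eventually_ge_atTop (0:ℝ)] with t ht
      exact mul_nonneg ((hreg t ht).1) (le_trans hQm.le (hreg t ht).2.1)
    · filter_upwards [eventually_ge_atTop (0:ℝ)] with t ht
      have h1 := mul_le_mul_of_nonneg_left (hreg t ht).2.2.1 (hreg t ht).1
      linarith [h1]
    · simpa using hBtend.const_mul Q_M
  -- P → P_h
  have hPtend : Tendsto P atTop (nhds P_h) := by
    have := hTtend.sub hBQtend
    rw [sub_zero] at this
    apply this.congr
    intro t; ring
  -- Q → Qhat
  have hPev2 : ∀ ε > (0:ℝ), ∀ᶠ t in atTop, P_h - ε ≤ P t := by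
    intro ε hε
    have := Metric.tendsto_atTop.1 hPtend ε hε
    obtain ⟨T1, hT1⟩ := this
    refine eventually_atTop.2 ⟨T1, fun t ht => ?_⟩
    have := hT1 t ht
    rw [Real.dist_eq, abs_sub_lt_iff] at this
    linarith [this.2]
  have hBev2 : ∀ ε > (0:ℝ), ∀ᶠ t in atTop, B t ≤ ε := by
    intro ε hε
    have := Metric.tendsto_atTop.1 hBtend ε hε
    obtain ⟨T1, hT1⟩ := this
    refine eventually_atTop.2 ⟨T1, fun t ht => ?_⟩
    have := hT1 t ht
    rw [Real.dist_eq, abs_sub_lt_iff] at this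
    linarith [this.1]
  have hQtend : Tendsto Q atTop
      (nhds (Qhat r Q_m Q_M z_m k K_bg H I_in ρ_m M P_h)) := by
    rw [Metric.tendsto_atTop]
    intro ε hε
    set Qh := Qhat r Q_m Q_M z_m k K_bg H I_in ρ_m M P_h with hQh_def
    -- choose σ by continuity
    have hcu : ContinuousAt (fun σ : ℝ =>
        Qst r ρ_m Q_m Q_M M (hfun z_m k K_bg H I_in σ) (P_h + σ)) 0 := by
      apply hQst_cont _ _ (hfun_contAt hH hIin hzm hk hKbg 0 (le_refl 0)) (by fun_prop)
      · exact hh 0 (le_refl 0)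
      · rw [add_zero]; exact hPh
    have hcl : ContinuousAt (fun σ : ℝ =>
        Qst r ρ_m Q_m Q_M M (hfun z_m k K_bg H I_in 0) (max (P_h - σ) 0)) 0 := by
      apply hQst_cont _ _ continuousAt_const
      · exact ((continuous_const.sub continuous_id).max continuous_const).continuousAt
      · exact hh 0 (le_refl 0)
      · simp
    have hval_u : Qst r ρ_m Q_m Q_M M (hfun z_m k K_bg H I_in 0) (P_h + 0) = Qh := by
      rw [add_zero]; exact hQhat_eq.symm
    have hval_l : Qst r ρ_m Q_m Q_M M (hfun z_m k K_bg H I_in 0) (max (P_h - 0) 0) = Qh := by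
      rw [sub_zero, max_eq_left hPh]; exact hQhat_eq.symm
    have hev_u : ∀ᶠ σ in nhds (0:ℝ),
        Qst r ρ_m Q_m Q_M M (hfun z_m k K_bg H I_in σ) (P_h + σ) < Qh + ε / 2 := by
      apply hcu.tendsto.eventually_lt_const
      rw [hval_u]; linarith
    have hev_l : ∀ᶠ σ in nhds (0:ℝ),
        Qh - ε / 2 < Qst r ρ_m Q_m Q_M M (hfun z_m k K_bg H I_in 0) (max (P_h - σ) 0) := by
      apply hcl.tendsto.eventually_const_lt
      rw [hval_l]; linarith
    obtain ⟨σ, ⟨h1, h2⟩, h3⟩ := ((((hev_u.and hev_l).filter_mono nhdsWithin_le_nhds).and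
      self_mem_nhdsWithin) : ∀ᶠ σ in nhdsWithin (0:ℝ) (Ioi 0), _).exists
    have hσpos : (0:ℝ) < σ := h3
    -- upper bound eventually
    have hup := hQcomp σ σ hσpos hσpos (hBev2 σ hσpos) (ε/4) (by linarith)
    -- lower bound eventually
    have hlow : ∀ᶠ t in atTop, Qst r ρ_m Q_m Q_M M (hfun z_m k K_bg H I_in 0)
        (max (P_h - σ) 0) - ε / 4 ≤ Q t := by
      set pt := max (P_h - σ) 0 with hpt_def
      have hpt0 : 0 ≤ pt := le_max_right _ _
      set ρc := rcoef ρ_m Q_m Q_M M pt with hρc_def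
      have hρc : 0 ≤ ρc := rcoef_nonneg hρm hQm hQmM hM hpt0
      have hη0 : 0 < hfun z_m k K_bg H I_in 0 := hh 0 (le_refl 0)
      have hbb : 0 < ρc + r * hfun z_m k K_bg H I_in 0 := by positivity
      have hev : ∀ᶠ t in atTop, ∃ v, HasDerivAt (fun u => -(Q u)) v t ∧
          v ≤ (-(ρc * Q_M + r * hfun z_m k K_bg H I_in 0 * Q_m))
            - (ρc + r * hfun z_m k K_bg H I_in 0) * (-(Q t)) := by
        filter_upwards [hPev2 σ hσpos, eventually_ge_atTop (0:ℝ)] with t h1' h3'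
        refine ⟨_, (hQ t h3').neg, ?_⟩
        obtain ⟨hB0, hQm', hQM', hP0⟩ := hreg t h3'
        have hQne : Q t ≠ 0 := ne_of_gt (lt_of_lt_of_le hQm hQm')
        have hVeq : Vfun r Q_m Q_M z_m k K_bg H I_in l D ρ_m M (B t) (Q t) (P t)
            = rhofun ρ_m Q_m Q_M M (Q t) (P t)
              - r * (Q t - Q_m) * hfun z_m k K_bg H I_in (B t) := by
          simp only [Vfun]; field_simp
        have h4 : ρc * (Q_M - Q t) ≤ rhofun ρ_m Q_m Q_M M (Q t) (P t) := by
          apply rho_ge hρm hQm hQmM hM hQM' hpt0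
          rw [hpt_def]
          apply max_le (by linarith) hP0
        have h5 : hfun z_m k K_bg H I_in (B t) ≤ hfun z_m k K_bg H I_in 0 :=
          hhanti (le_refl 0) hB0
        have h6 : r * (Q t - Q_m) * hfun z_m k K_bg H I_in (B t)
            ≤ r * (Q t - Q_m) * hfun z_m k K_bg H I_in 0 :=
          mul_le_mul_of_nonneg_left h5 (mul_nonneg hr.le (by linarith))
        rw [hVeq]
        have heq : (-(ρc * Q_M + r * hfun z_m k K_bg H I_in 0 * Q_m))
            - (ρc + r * hfun z_m k K_bg H I_in 0) * (-(Q t))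
            = -(ρc * (Q_M - Q t) - r * (Q t - Q_m) * hfun z_m k K_bg H I_in 0) := by ring
        linarith [h4, h6, heq]
      have hcomp := lin_comp_ev hbb hev (ε/4) (by linarith)
      filter_upwards [hcomp] with t ht
      rw [Qst, ← hρc_def]
      have : (-(ρc * Q_M + r * hfun z_m k K_bg H I_in 0 * Q_m))
          / (ρc + r * hfun z_m k K_bg H I_in 0)
          = -((ρc * Q_M + r * hfun z_m k K_bg H I_in 0 * Q_m)
          / (ρc + r * hfun z_m k K_bg H I_in 0)) := by ring
      rw [this] at ht
      linarith
    obtain ⟨T2, hT2⟩ := eventually_atTop.1 (hup.and hlow)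
    refine ⟨T2, fun t ht => ?_⟩
    obtain ⟨hu, hlo⟩ := hT2 t ht
    rw [Real.dist_eq, abs_sub_lt_iff]
    constructor
    · linarith
    · linarith
  exact hBtend.prodMk_nhds (hQtend.prodMk_nhds hPtend)

private lemma stable_lemma
    (hr : 0 < r) (hQm : 0 < Q_m) (hQM : 0 < Q_M) (hzm : 0 < z_m) (hk : 0 < k)
    (hKbg : 0 < K_bg) (hH : 0 < H) (hIin : 0 < I_in) (hl : 0 < l) (hD : 0 < D)
    (hρm : 0 < ρ_m) (hM : 0 < M) (hQmM : Q_m < Q_M) (hPh : 0 ≤ P_h)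
    (hR0 : R0 r Q_m Q_M z_m k K_bg H I_in l D ρ_m M P_h < 1) :
    ∀ ε > (0:ℝ), ∃ δ > (0:ℝ), ∀ B Q P : ℝ → ℝ,
      IsRegionSol r Q_m Q_M z_m k K_bg H I_in l D ρ_m M P_h B Q P →
      dist (B 0, Q 0, P 0)
        ((0:ℝ), Qhat r Q_m Q_M z_m k K_bg H I_in ρ_m M P_h, P_h) < δ →
      ∀ t ≥ (0:ℝ), dist (B t, Q t, P t)
        ((0:ℝ), Qhat r Q_m Q_M z_m k K_bg H I_in ρ_m M P_h, P_h) < ε := by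
  intro ε hε
  have hd : 0 < D / z_m := div_pos hD hzm
  have hμ : 0 < l + D / z_m := by linarith
  have hh : ∀ b ≥ (0:ℝ), 0 < hfun z_m k K_bg H I_in b :=
    fun b hb => hfun_pos hH hIin hzm hk hKbg b hb
  have hhanti : ∀ {b1 b2 : ℝ}, 0 ≤ b1 → b1 ≤ b2 →
      hfun z_m k K_bg H I_in b2 ≤ hfun z_m k K_bg H I_in b1 :=
    fun h1 h2 => hfun_anti hH hIin hzm hk hKbg h1 h2
  set h0 := hfun z_m k K_bg H I_in 0 with hh0_def
  have hh0 : 0 < h0 := hh 0 (le_refl 0)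
  set Qh := Qhat r Q_m Q_M z_m k K_bg H I_in ρ_m M P_h with hQh_def
  have hQhat_eq : Qh = Qst r ρ_m Q_m Q_M M h0 P_h := rfl
  have hR0' : r * h0 * (1 - Q_m / Qh) < l + D / z_m := by
    rw [R0] at hR0
    exact (div_lt_one hμ).1 hR0
  have hQhge : Q_m ≤ Qh := by
    rw [hQhat_eq]; exact Qst_ge_Qm hρm hQm hQmM hM hr hh0 hPh
  have hQhpos : 0 < Qh := lt_of_lt_of_le hQm hQhge
  -- choice of κ
  obtain ⟨c1, hc1_def⟩ : ∃ c1 : ℝ, c1 = (l + D / z_m) - r * h0 * (1 - Q_m / Qh) := ⟨_, rfl⟩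
  have hc1 : 0 < c1 := by rw [hc1_def]; linarith
  obtain ⟨κ, hκ_def⟩ : ∃ κ : ℝ, κ = min (ε / 4) (c1 * Qh / (r * h0)) := ⟨_, rfl⟩
  have hκpos : 0 < κ := by
    rw [hκ_def]
    apply lt_min (by linarith)
    positivity
  have hκε : κ ≤ ε / 4 := by rw [hκ_def]; exact min_le_left _ _
  have hκmain : r * h0 * (1 - Q_m / (Qh + κ)) < l + D / z_m := by
    have hκle : r * h0 * κ ≤ c1 * Qh := by
      have h1 : κ ≤ c1 * Qh / (r * h0) := by rw [hκ_def]; exact min_le_right _ _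
      have h2 : r * h0 * (c1 * Qh / (r * h0)) = c1 * Qh := by field_simp
      calc r * h0 * κ ≤ r * h0 * (c1 * Qh / (r * h0)) :=
            mul_le_mul_of_nonneg_left h1 (by positivity)
        _ = c1 * Qh := h2
    have hQhκ : 0 < Qh + κ := by linarith
    have hx : (1 - Q_m / Qh) * Qh = Qh - Q_m := by field_simp
    have he1 : r * h0 * (Qh - Q_m) = ((l + D / z_m) - c1) * Qh := by
      linear_combination Qh * hc1_def - r * h0 * hx
    have h2 : 1 - Q_m / (Qh + κ) = ((Qh + κ) - Q_m) / (Qh + κ) := by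
      field_simp
    rw [h2, ← mul_div_assoc, div_lt_iff₀ hQhκ]
    have hgoal : r * h0 * ((Qh + κ) - Q_m) = r * h0 * (Qh - Q_m) + r * h0 * κ := by ring
    have hexp : (l + D / z_m) * (Qh + κ) = (l + D / z_m) * Qh + (l + D / z_m) * κ := by ring
    have hc1Qh : 0 < c1 * κ := mul_pos hc1 hκpos
    nlinarith [he1, hκle, hgoal, hexp, hc1Qh, mul_pos hμ hκpos]
  obtain ⟨c, hc_def⟩ : ∃ c : ℝ, c = (l + D / z_m) - r * h0 * (1 - Q_m / (Qh + κ)) := ⟨_, rfl⟩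
  have hc : 0 < c := by rw [hc_def]; linarith
  -- choice of σ by continuity
  have hrc_cont : ∀ g : ℝ → ℝ, ContinuousAt g 0 → 0 ≤ g 0 →
      ContinuousAt (fun σ : ℝ => rcoef ρ_m Q_m Q_M M (g σ)) 0 := by
    intro g hg hg0
    simp only [rcoef]
    apply ContinuousAt.mul continuousAt_const
    apply ContinuousAt.div hg (hg.add continuousAt_const)
    have : 0 < g 0 + M := by linarith
    exact ne_of_gt this
  have hQst_cont : ∀ gη gp : ℝ → ℝ, ContinuousAt gη 0 → ContinuousAt gp 0 →
      0 < gη 0 → 0 ≤ gp 0 →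
      ContinuousAt (fun σ : ℝ => Qst r ρ_m Q_m Q_M M (gη σ) (gp σ)) 0 := by
    intro gη gp hgη hgp hη0 hp0
    have hrc := hrc_cont gp hgp hp0
    have hrc0 : 0 ≤ rcoef ρ_m Q_m Q_M M (gp 0) := rcoef_nonneg hρm hQm hQmM hM hp0
    simp only [Qst]
    apply ContinuousAt.div
    · exact (hrc.mul continuousAt_const).add ((hgη.const_mul r).mul continuousAt_const)
    · exact hrc.add (hgη.const_mul r)
    · have : 0 < rcoef ρ_m Q_m Q_M M (gp 0) + r * gη 0 := by nlinarith
      exact ne_of_gt this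
  have hcu : ContinuousAt (fun σ : ℝ =>
      Qst r ρ_m Q_m Q_M M (hfun z_m k K_bg H I_in σ) (P_h + σ)) 0 := by
    apply hQst_cont _ _ (hfun_contAt hH hIin hzm hk hKbg 0 (le_refl 0)) (by fun_prop)
    · exact hh 0 (le_refl 0)
    · rw [add_zero]; exact hPh
  have hcl : ContinuousAt (fun σ : ℝ =>
      Qst r ρ_m Q_m Q_M M h0 (max (P_h - σ - σ * Q_M) 0)) 0 := by
    apply hQst_cont _ _ continuousAt_const
    · apply Continuous.continuousAt
      apply Continuous.max _ continuous_const
      fun_prop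
    · exact hh0
    · exact le_max_right _ _
  have hval_u : Qst r ρ_m Q_m Q_M M (hfun z_m k K_bg H I_in 0) (P_h + 0) = Qh := by
    rw [add_zero]; exact hQhat_eq.symm
  have hval_l : Qst r ρ_m Q_m Q_M M h0 (max (P_h - 0 - 0 * Q_M) 0) = Qh := by
    have hm : max (P_h - 0 - 0 * Q_M) 0 = P_h := by
      rw [zero_mul, sub_zero, sub_zero]; exact max_eq_left hPh
    rw [hm]; exact hQhat_eq.symm
  have hev_u : ∀ᶠ σ in nhds (0:ℝ),
      Qst r ρ_m Q_m Q_M M (hfun z_m k K_bg H I_in σ) (P_h + σ) < Qh + κ := by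
    apply hcu.tendsto.eventually_lt_const
    rw [hval_u]; linarith
  have hev_l : ∀ᶠ σ in nhds (0:ℝ),
      Qh - κ < Qst r ρ_m Q_m Q_M M h0 (max (P_h - σ - σ * Q_M) 0) := by
    apply hcl.tendsto.eventually_const_lt
    rw [hval_l]; linarith
  have hmemIoo : Ioo (0:ℝ) (min (ε/4) (ε / (4 * (1 + Q_M)))) ∈ nhdsWithin (0:ℝ) (Ioi 0) := by
    apply Ioo_mem_nhdsGT_of_mem
    refine ⟨le_refl 0, ?_⟩
    apply lt_min (by linarith)
    positivity
  obtain ⟨σ, ⟨hσu, hσl⟩, hσIoo⟩ :=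
    ((((hev_u.and hev_l).filter_mono nhdsWithin_le_nhds).and hmemIoo) :
      ∀ᶠ σ in nhdsWithin (0:ℝ) (Ioi 0), _).exists
  have hσpos : 0 < σ := hσIoo.1
  have hσε : σ < ε / 4 := lt_of_lt_of_le hσIoo.2 (min_le_left _ _)
  have hσQM : σ * (1 + Q_M) < ε / 4 := by
    have h1 := lt_of_lt_of_le hσIoo.2 (min_le_right _ _)
    have h2 : 0 < 1 + Q_M := by linarith
    rw [div_mul_eq_div_div] at h1
    calc σ * (1 + Q_M) < (ε / 4 / (1 + Q_M)) * (1 + Q_M) := by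
          apply mul_lt_mul_of_pos_right h1 h2
      _ = ε / 4 := by field_simp
  -- choice of δ
  have hδpos : 0 < min (min σ κ) (σ / (1 + Q_M)) := by
    apply lt_min (lt_min hσpos hκpos)
    exact div_pos hσpos (by linarith)
  refine ⟨min (min σ κ) (σ / (1 + Q_M)), hδpos, ?_⟩
  intro B Q P hsol hdist
  set δ := min (min σ κ) (σ / (1 + Q_M)) with hδ_def
  have hδσ : δ ≤ σ := le_trans (min_le_left _ _) (min_le_left _ _)
  have hδκ : δ ≤ κ := le_trans (min_le_left _ _) (min_le_right _ _)
  have hδQM : δ * (1 + Q_M) ≤ σ := by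
    have h1 : δ ≤ σ / (1 + Q_M) := min_le_right _ _
    have h2 : 0 < 1 + Q_M := by linarith
    calc δ * (1 + Q_M) ≤ (σ / (1 + Q_M)) * (1 + Q_M) :=
          mul_le_mul_of_nonneg_right h1 h2.le
      _ = σ := by field_simp
  rw [Prod.dist_eq, Prod.dist_eq] at hdist
  simp only [Real.dist_eq, sub_zero, sup_lt_iff] at hdist
  obtain ⟨hB0d, hQ0d, hP0d⟩ := hdist
  have hTf := T_formula hsol
  obtain ⟨hB, hQ, hP, hreg⟩ := hsol
  obtain ⟨hB00, hQ0m, hQ0M, hP00⟩ := hreg 0 (le_refl 0)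
  -- initial total phosphorus close
  have hT0 : |P 0 + B 0 * Q 0 - P_h| < σ := by
    have h1 : B 0 * Q 0 ≤ B 0 * Q_M := mul_le_mul_of_nonneg_left hQ0M hB00
    have h2 : B 0 * Q_M ≤ δ * Q_M := by
      apply mul_le_mul_of_nonneg_right _ hQM.le
      have := abs_lt.1 hB0d
      linarith [this.2]
    have h3 := abs_lt.1 hP0d
    have h6 : 0 ≤ B 0 * Q 0 := mul_nonneg hB00 (le_trans hQm.le hQ0m)
    have h7 : δ * (1 + Q_M) = δ + δ * Q_M := by ring
    rw [abs_lt]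
    constructor
    · linarith [h3.1, hδσ]
    · linarith [h3.2, h1, h2, hδQM, h7]
  have hTbnd : ∀ t ≥ (0:ℝ), |P t + B t * Q t - P_h| < σ := by
    intro t ht
    rw [hTf t ht]
    have he1 : Real.exp (-(D / z_m * t)) ≤ 1 := by
      rw [Real.exp_le_one_iff]
      have := mul_nonneg hd.le ht
      linarith
    have he0 : 0 < Real.exp (-(D / z_m * t)) := Real.exp_pos _
    have heq : P_h + (P 0 + B 0 * Q 0 - P_h) * Real.exp (-(D / z_m * t)) - P_h
        = (P 0 + B 0 * Q 0 - P_h) * Real.exp (-(D / z_m * t)) := by ring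
    rw [heq, abs_mul, Real.abs_exp]
    calc |P 0 + B 0 * Q 0 - P_h| * Real.exp (-(D / z_m * t))
        ≤ |P 0 + B 0 * Q 0 - P_h| * 1 := by
          apply mul_le_mul_of_nonneg_left he1 (abs_nonneg _)
      _ = |P 0 + B 0 * Q 0 - P_h| := by ring
      _ < σ := hT0
  have hPub : ∀ t ≥ (0:ℝ), P t < P_h + σ := by
    intro t ht
    obtain ⟨h1, h2, h3, h4⟩ := hreg t ht
    have h5 := (abs_lt.1 (hTbnd t ht)).2
    have h6 : 0 ≤ B t * Q t := mul_nonneg h1 (le_trans hQm.le h2)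
    linarith
  have hTlb : ∀ t ≥ (0:ℝ), P_h - σ < P t + B t * Q t := by
    intro t ht
    have := (abs_lt.1 (hTbnd t ht)).1
    linarith
  -- the invariance argument
  have hInv : ∀ t1 ≥ (0:ℝ), B t1 < σ ∧ Q t1 < Qh + κ := by
    intro t1 ht1
    by_contra hcon
    set A := (Icc 0 t1 ∩ B ⁻¹' Ici σ) ∪ (Icc 0 t1 ∩ Q ⁻¹' Ici (Qh + κ)) with hA_def
    have hcontB : ContinuousOn B (Icc 0 t1) :=
      fun u hu => ((hB u hu.1).continuousAt).continuousWithinAt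
    have hcontQ : ContinuousOn Q (Icc 0 t1) :=
      fun u hu => ((hQ u hu.1).continuousAt).continuousWithinAt
    have hclosed : IsClosed A := by
      apply IsClosed.union
      · exact hcontB.preimage_isClosed_of_isClosed isClosed_Icc isClosed_Ici
      · exact hcontQ.preimage_isClosed_of_isClosed isClosed_Icc isClosed_Ici
    have htA : t1 ∈ A := by
      rw [not_and_or] at hcon
      rcases hcon with h | h
      · exact Or.inl ⟨⟨ht1, le_refl t1⟩, not_lt.1 h⟩
      · exact Or.inr ⟨⟨ht1, le_refl t1⟩, not_lt.1 h⟩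
    have hAlb : ∀ u ∈ A, (0:ℝ) ≤ u := by
      intro u hu
      rcases hu with ⟨h, _⟩ | ⟨h, _⟩ <;> exact h.1
    have hAbdd : BddBelow A := ⟨0, hAlb⟩
    have hAne : A.Nonempty := ⟨t1, htA⟩
    set τ := sInf A with hτ_def
    have hτA : τ ∈ A := hclosed.csInf_mem hAne hAbdd
    have hτmem : τ ∈ Icc 0 t1 := by
      rcases hτA with ⟨h, _⟩ | ⟨h, _⟩ <;> exact h
    have hB0σ : B 0 < σ := by
      have := (abs_lt.1 hB0d).2
      linarith
    have hQ0κ : Q 0 < Qh + κ := by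
      have := (abs_lt.1 hQ0d).2
      linarith
    have h0notA : (0:ℝ) ∉ A := by
      intro h
      rcases h with ⟨_, h⟩ | ⟨_, h⟩
      · exact absurd h (not_le.2 hB0σ)
      · exact absurd h (not_le.2 hQ0κ)
    have hτpos : 0 < τ := by
      rcases lt_or_eq_of_le hτmem.1 with h | h
      · exact h
      · exact absurd (h ▸ hτA) h0notA
    have hleft : ∀ u, 0 ≤ u → u < τ → B u < σ ∧ Q u < Qh + κ := by
      intro u hu1 hu2
      have hunotA : u ∉ A := fun h => absurd (csInf_le hAbdd h) (not_le.2 hu2)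
      have huIcc : u ∈ Icc 0 t1 := ⟨hu1, le_trans hu2.le hτmem.2⟩
      constructor
      · by_contra h; push_neg at h
        exact hunotA (Or.inl ⟨huIcc, h⟩)
      · by_contra h; push_neg at h
        exact hunotA (Or.inr ⟨huIcc, h⟩)
    have hIooτ : Ioo (0:ℝ) τ ∈ nhdsWithin τ (Iio τ) :=
      Ioo_mem_nhdsLT_of_mem ⟨hτpos, le_refl τ⟩
    have hBτle : B τ ≤ σ := by
      have htd : Tendsto B (nhdsWithin τ (Iio τ)) (nhds (B τ)) :=
        ((hB τ hτmem.1).continuousAt).tendsto.mono_left nhdsWithin_le_nhds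
      apply le_of_tendsto htd
      filter_upwards [hIooτ] with u hu
      exact (hleft u hu.1.le hu.2).1.le
    have hQτle : Q τ ≤ Qh + κ := by
      have htd : Tendsto Q (nhdsWithin τ (Iio τ)) (nhds (Q τ)) :=
        ((hQ τ hτmem.1).continuousAt).tendsto.mono_left nhdsWithin_le_nhds
      apply le_of_tendsto htd
      filter_upwards [hIooτ] with u hu
      exact (hleft u hu.1.le hu.2).2.le
    obtain ⟨hBτ0, hQmτ, hQMτ, hPτ0⟩ := hreg τ hτmem.1
    have hQτpos : 0 < Q τ := lt_of_lt_of_le hQm hQmτ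
    rcases hτA with ⟨_, hBeq'⟩ | ⟨_, hQeq'⟩
    · -- B-boundary
      have hBeq : B τ = σ := le_antisymm hBτle hBeq'
      have key1 : 0 ≤ 1 - Q_m / Q τ := by
        have : Q_m / Q τ ≤ 1 := by rw [div_le_one hQτpos]; linarith
        linarith
      have key2 : 1 - Q_m / Q τ ≤ 1 - Q_m / (Qh + κ) := by
        have : Q_m / (Qh + κ) ≤ Q_m / Q τ :=
          div_le_div_of_nonneg_left hQm.le hQτpos hQτle
        linarith
      have key3 : (1 - Q_m / Q τ) * hfun z_m k K_bg H I_in (B τ)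
          ≤ (1 - Q_m / (Qh + κ)) * h0 := by
        apply mul_le_mul key2 (hhanti (le_refl 0) hBτ0) (hh _ hBτ0).le
        linarith
      have key4 := mul_le_mul_of_nonneg_left key3 hr.le
      have hUneg : Ufun r Q_m Q_M z_m k K_bg H I_in l D ρ_m M (B τ) (Q τ) (P τ) < 0 := by
        have hUeq : Ufun r Q_m Q_M z_m k K_bg H I_in l D ρ_m M (B τ) (Q τ) (P τ)
            = B τ * (r * ((1 - Q_m / Q τ) * hfun z_m k K_bg H I_in (B τ))
              - (l + D / z_m)) := by
          simp only [Ufun]; ring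
        rw [hUeq]
        have h5 : r * ((1 - Q_m / Q τ) * hfun z_m k K_bg H I_in (B τ)) - (l + D / z_m)
            ≤ -c := by
          rw [hc_def]
          have : r * ((1 - Q_m / (Qh + κ)) * h0) = r * h0 * (1 - Q_m / (Qh + κ)) := by ring
          linarith [key4, this]
        apply mul_neg_of_pos_of_neg
        · rw [hBeq]; exact hσpos
        · linarith [h5, hc]
      have hslope := hasDerivAt_iff_tendsto_slope.1 (hB τ hτmem.1)
      have h2 : ∀ᶠ u in nhdsWithin τ (Iio τ), slope B τ u < 0 :=
        ((hslope.mono_left (nhdsWithin_mono τ (fun u hu => (ne_of_lt hu : u ≠ τ)))).eventually_lt_const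
          hUneg)
      obtain ⟨u, hu1, hu2⟩ := (h2.and hIooτ).exists
      have hslopeq : slope B τ u = (B u - B τ) / (u - τ) := slope_def_field B τ u
      rw [hslopeq] at hu1
      have huτ : u - τ < 0 := by linarith [hu2.2]
      rcases div_neg_iff.1 hu1 with ⟨ha, hb⟩ | ⟨ha, hb⟩
      · have : B u > σ := by rw [← hBeq]; linarith
        exact absurd this (not_lt.2 (hleft u hu2.1.le hu2.2).1.le)
      · linarith
    · -- Q-boundary
      have hQeq : Q τ = Qh + κ := le_antisymm hQτle hQeq'
      set ησ := hfun z_m k K_bg H I_in σ with hησ_def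
      have hησpos : 0 < ησ := hh σ hσpos.le
      set ρc := rcoef ρ_m Q_m Q_M M (P_h + σ) with hρc_def
      have hρc0 : 0 ≤ ρc := rcoef_nonneg hρm hQm hQmM hM (by linarith)
      have hbb : 0 < ρc + r * ησ := by positivity
      have hVneg : Vfun r Q_m Q_M z_m k K_bg H I_in l D ρ_m M (B τ) (Q τ) (P τ) < 0 := by
        have hQne : Q τ ≠ 0 := ne_of_gt hQτpos
        have hVeq : Vfun r Q_m Q_M z_m k K_bg H I_in l D ρ_m M (B τ) (Q τ) (P τ)
            = rhofun ρ_m Q_m Q_M M (Q τ) (P τ)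
              - r * (Q τ - Q_m) * hfun z_m k K_bg H I_in (B τ) := by
          simp only [Vfun]; field_simp
        have h4 : rhofun ρ_m Q_m Q_M M (Q τ) (P τ) ≤ ρc * (Q_M - Q τ) :=
          rho_le hρm hQm hQmM hM hQMτ hPτ0 (hPub τ hτmem.1).le
        have h5 : ησ ≤ hfun z_m k K_bg H I_in (B τ) := hhanti hBτ0 hBτle
        have h6 : r * (Q τ - Q_m) * ησ ≤ r * (Q τ - Q_m) * hfun z_m k K_bg H I_in (B τ) :=
          mul_le_mul_of_nonneg_left h5 (mul_nonneg hr.le (by linarith))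
        have h7 : ρc * (Q_M - Q τ) - r * (Q τ - Q_m) * ησ
            = (ρc * Q_M + r * ησ * Q_m) - (ρc + r * ησ) * Q τ := by ring
        have h8 : (ρc * Q_M + r * ησ * Q_m) - (ρc + r * ησ) * Q τ
            = (ρc + r * ησ) * (Qst r ρ_m Q_m Q_M M ησ (P_h + σ) - Q τ) := by
          rw [Qst, ← hρc_def]
          field_simp
        have h9 : Qst r ρ_m Q_m Q_M M ησ (P_h + σ) - Q τ < 0 := by
          rw [hQeq]; linarith [hσu]
        have h10 : (ρc + r * ησ) * (Qst r ρ_m Q_m Q_M M ησ (P_h + σ) - Q τ) < 0 :=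
          mul_neg_of_pos_of_neg hbb h9
        rw [hVeq]
        linarith [h4, h6, h7, h8, h10]
      have hslope := hasDerivAt_iff_tendsto_slope.1 (hQ τ hτmem.1)
      have h2 : ∀ᶠ u in nhdsWithin τ (Iio τ), slope Q τ u < 0 :=
        ((hslope.mono_left (nhdsWithin_mono τ (fun u hu => (ne_of_lt hu : u ≠ τ)))).eventually_lt_const
          hVneg)
      obtain ⟨u, hu1, hu2⟩ := (h2.and hIooτ).exists
      have hslopeq : slope Q τ u = (Q u - Q τ) / (u - τ) := slope_def_field Q τ u
      rw [hslopeq] at hu1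
      rcases div_neg_iff.1 hu1 with ⟨ha, hb⟩ | ⟨ha, hb⟩
      · have : Q u > Qh + κ := by rw [← hQeq]; linarith
        exact absurd this (not_lt.2 (hleft u hu2.1.le hu2.2).2.le)
      · linarith [hu2.2]
  -- lower invariance for Q
  have hInv2 : ∀ t1 ≥ (0:ℝ), Qh - κ < Q t1 := by
    intro t1 ht1
    by_contra hcon
    push_neg at hcon
    set A := Icc 0 t1 ∩ Q ⁻¹' Iic (Qh - κ) with hA_def
    have hcontQ : ContinuousOn Q (Icc 0 t1) :=
      fun u hu => ((hQ u hu.1).continuousAt).continuousWithinAt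
    have hclosed : IsClosed A :=
      hcontQ.preimage_isClosed_of_isClosed isClosed_Icc isClosed_Iic
    have htA : t1 ∈ A := ⟨⟨ht1, le_refl t1⟩, hcon⟩
    have hAlb : ∀ u ∈ A, (0:ℝ) ≤ u := fun u hu => hu.1.1
    have hAbdd : BddBelow A := ⟨0, hAlb⟩
    have hAne : A.Nonempty := ⟨t1, htA⟩
    set τ := sInf A with hτ_def
    have hτA : τ ∈ A := hclosed.csInf_mem hAne hAbdd
    have hτmem : τ ∈ Icc 0 t1 := hτA.1
    have hQ0κ : Qh - κ < Q 0 := by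
      have := (abs_lt.1 hQ0d).1
      linarith
    have h0notA : (0:ℝ) ∉ A := fun h => absurd h.2 (not_le.2 hQ0κ)
    have hτpos : 0 < τ := by
      rcases lt_or_eq_of_le hτmem.1 with h | h
      · exact h
      · exact absurd (h ▸ hτA) h0notA
    have hleft : ∀ u, 0 ≤ u → u < τ → Qh - κ < Q u := by
      intro u hu1 hu2
      have hunotA : u ∉ A := fun h => absurd (csInf_le hAbdd h) (not_le.2 hu2)
      have huIcc : u ∈ Icc 0 t1 := ⟨hu1, le_trans hu2.le hτmem.2⟩
      by_contra h; push_neg at h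
      exact hunotA ⟨huIcc, h⟩
    have hIooτ : Ioo (0:ℝ) τ ∈ nhdsWithin τ (Iio τ) :=
      Ioo_mem_nhdsLT_of_mem ⟨hτpos, le_refl τ⟩
    have hQτge : Qh - κ ≤ Q τ := by
      have htd : Tendsto Q (nhdsWithin τ (Iio τ)) (nhds (Q τ)) :=
        ((hQ τ hτmem.1).continuousAt).tendsto.mono_left nhdsWithin_le_nhds
      apply ge_of_tendsto htd
      filter_upwards [hIooτ] with u hu
      exact (hleft u hu.1.le hu.2).le
    have hQeq : Q τ = Qh - κ := le_antisymm hτA.2 hQτge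
    obtain ⟨hBτ0, hQmτ, hQMτ, hPτ0⟩ := hreg τ hτmem.1
    have hQτpos : 0 < Q τ := lt_of_lt_of_le hQm hQmτ
    set pt := max (P_h - σ - σ * Q_M) 0 with hpt_def
    have hpt0 : 0 ≤ pt := le_max_right _ _
    set ρc := rcoef ρ_m Q_m Q_M M pt with hρc_def
    have hρc0 : 0 ≤ ρc := rcoef_nonneg hρm hQm hQmM hM hpt0
    have hbb : 0 < ρc + r * h0 := by positivity
    have hptle : pt ≤ P τ := by
      have h1 : B τ * Q τ ≤ σ * Q_M := by
        have h2 := (hInv τ hτmem.1).1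
        have h3 : B τ * Q τ ≤ B τ * Q_M := mul_le_mul_of_nonneg_left hQMτ hBτ0
        have h4 : B τ * Q_M ≤ σ * Q_M := mul_le_mul_of_nonneg_right h2.le hQM.le
        linarith
      have h4 := hTlb τ hτmem.1
      apply max_le _ hPτ0
      linarith
    have hVpos : 0 < Vfun r Q_m Q_M z_m k K_bg H I_in l D ρ_m M (B τ) (Q τ) (P τ) := by
      have hQne : Q τ ≠ 0 := ne_of_gt hQτpos
      have hVeq : Vfun r Q_m Q_M z_m k K_bg H I_in l D ρ_m M (B τ) (Q τ) (P τ)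
          = rhofun ρ_m Q_m Q_M M (Q τ) (P τ)
            - r * (Q τ - Q_m) * hfun z_m k K_bg H I_in (B τ) := by
        simp only [Vfun]; field_simp
      have h4 : ρc * (Q_M - Q τ) ≤ rhofun ρ_m Q_m Q_M M (Q τ) (P τ) :=
        rho_ge hρm hQm hQmM hM hQMτ hpt0 hptle
      have h5 : hfun z_m k K_bg H I_in (B τ) ≤ h0 := hhanti (le_refl 0) hBτ0
      have h6 : r * (Q τ - Q_m) * hfun z_m k K_bg H I_in (B τ) ≤ r * (Q τ - Q_m) * h0 :=
        mul_le_mul_of_nonneg_left h5 (mul_nonneg hr.le (by linarith))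
      have h7 : ρc * (Q_M - Q τ) - r * (Q τ - Q_m) * h0
          = (ρc + r * h0) * (Qst r ρ_m Q_m Q_M M h0 pt - Q τ) := by
        rw [Qst, ← hρc_def]
        field_simp
        ring
      have h9 : 0 < Qst r ρ_m Q_m Q_M M h0 pt - Q τ := by
        rw [hQeq]; linarith [hσl]
      have h10 : 0 < (ρc + r * h0) * (Qst r ρ_m Q_m Q_M M h0 pt - Q τ) :=
        mul_pos hbb h9
      rw [hVeq]
      linarith [h4, h6, h7, h10]
    have hslope := hasDerivAt_iff_tendsto_slope.1 (hQ τ hτmem.1)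
    have h2 : ∀ᶠ u in nhdsWithin τ (Iio τ), 0 < slope Q τ u :=
      ((hslope.mono_left (nhdsWithin_mono τ (fun u hu => (ne_of_lt hu : u ≠ τ)))).eventually_const_lt
        hVpos)
    obtain ⟨u, hu1, hu2⟩ := (h2.and hIooτ).exists
    have hslopeq : slope Q τ u = (Q u - Q τ) / (u - τ) := slope_def_field Q τ u
    rw [hslopeq] at hu1
    rcases div_pos_iff.1 hu1 with ⟨ha, hb⟩ | ⟨ha, hb⟩
    · linarith [hu2.2]
    · have : Q u < Qh - κ := by rw [← hQeq]; linarith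
      exact absurd this (not_lt.2 (hleft u hu2.1.le hu2.2).le)
  -- conclusion
  intro t ht
  obtain ⟨hBt0, hQtm, hQtM, hPt0⟩ := hreg t ht
  obtain ⟨hBtσ, hQtκ⟩ := hInv t ht
  have hQtκ2 := hInv2 t ht
  have hPt_ub : P t < P_h + σ := hPub t ht
  have hPt_lb : P_h - σ - σ * Q_M < P t := by
    have h1 : B t * Q t ≤ σ * Q_M := by
      have h3 : B t * Q t ≤ B t * Q_M := mul_le_mul_of_nonneg_left hQtM hBt0
      have h4 : B t * Q_M ≤ σ * Q_M := mul_le_mul_of_nonneg_right hBtσ.le hQM.le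
      linarith
    have h4 := hTlb t ht
    linarith
  rw [Prod.dist_eq, Prod.dist_eq]
  simp only [Real.dist_eq, sub_zero, sup_lt_iff]
  have hσQM' : 0 ≤ σ * Q_M := by positivity
  have h7 : σ * (1 + Q_M) = σ + σ * Q_M := by ring
  refine ⟨?_, ?_, ?_⟩
  · rw [abs_lt]; constructor <;> linarith
  · rw [abs_lt]; constructor <;> linarith
  · rw [abs_lt]; constructor <;> linarith

end mainlemmas

open Filter in
/-- Global asymptotic stability of the extinction equilibrium:
if `R_0 < 1` then `E_0 = (0, Q̂, P_h)` is Lyapunov stable and attracts every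
solution staying in the region `{B ≥ 0, Q_m ≤ Q ≤ Q_M, P ≥ 0}`. -/
theorem extinction_equilibrium_GAS
    (r Q_m Q_M z_m k K_bg H I_in l D ρ_m M P_h : ℝ)
    (hr : 0 < r) (hQm : 0 < Q_m) (hQM : 0 < Q_M) (hzm : 0 < z_m) (hk : 0 < k)
    (hKbg : 0 < K_bg) (hH : 0 < H) (hIin : 0 < I_in) (hl : 0 < l) (hD : 0 < D)
    (hρm : 0 < ρ_m) (hM : 0 < M) (hQmM : Q_m < Q_M) (hPh : 0 ≤ P_h)
    (hR0 : R0 r Q_m Q_M z_m k K_bg H I_in l D ρ_m M P_h < 1) :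
    -- Lyapunov stability of E₀ = (0, Q̂, P_h)
    (∀ ε > (0:ℝ), ∃ δ > (0:ℝ), ∀ B Q P : ℝ → ℝ,
      IsRegionSol r Q_m Q_M z_m k K_bg H I_in l D ρ_m M P_h B Q P →
      dist (B 0, Q 0, P 0)
        ((0:ℝ), Qhat r Q_m Q_M z_m k K_bg H I_in ρ_m M P_h, P_h) < δ →
      ∀ t ≥ (0:ℝ), dist (B t, Q t, P t)
        ((0:ℝ), Qhat r Q_m Q_M z_m k K_bg H I_in ρ_m M P_h, P_h) < ε) ∧
    -- global attractivity on the region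
    (∀ B Q P : ℝ → ℝ,
      IsRegionSol r Q_m Q_M z_m k K_bg H I_in l D ρ_m M P_h B Q P →
      Tendsto (fun t => (B t, Q t, P t)) atTop
        (nhds ((0:ℝ), Qhat r Q_m Q_M z_m k K_bg H I_in ρ_m M P_h, P_h))) := by
  constructor
  · exact stable_lemma hr hQm hQM hzm hk hKbg hH hIin hl hD hρm hM hQmM hPh hR0
  · intro B Q P hsol
    exact attract_lemma hr hQm hQM hzm hk hKbg hH hIin hl hD hρm hM hQmM hPh hR0 hsol
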